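/- Let u : ℝ³ → ℝ be continuously differentiable and suppose there are constants C, R₀ > 0 such that for all |p| ≥ R₀: |u(p)| ≤ C |p|^{−2}, |∇u(p)| ≤ C |p|^{−3}, |u(p) − u(−p)| ≤ C |p|^{−3}, and |∇u(p) + ∇u(−p)| ≤ C |p|^{−4}. Define Δh_{ij} = δ_{i3} δ_{j3} u, and for each l ∈ {1,2,3} the vector field W^{(l)}_j(p) = p_l ( Σ_k ∂_k Δh_{kj}(p) − ∂_j (Σ_k Δh_{kk})(p) ) − ( Δh_{lj}(p) − (Σ_k Δh_{kk}(p)) δ_{lj} ). Then the center-of-mass deviation flux vanishes in the limit: lim_{A→∞} (1/16π) Φ_□(W^{(l)}, A) = 0 for each l ∈ {1,2,3}. -/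

import Mathlib

/-!
Pairing each face of `[-A, A]³` with the opposite one through `p ↦ -p`, the flux of `W` only sees
the odd parts `W(p) - W(-p)` on points with `|p| ≥ A`. For `Δh = δ_{i3} δ_{j3} u` the third
component of `W^{(l)}` vanishes and `W^{(l)}_j = u δ_{lj} - p_l ∂_j u` otherwise, so the parity
conditions make the odd part `O(|p|⁻³)`; over faces of area `4A²` the flux is `O(1/A)`.
-/

open MeasureTheory Filter intervalIntegral

/-- The Euclidean norm of a point of `ℝ³`. -/
noncomputable def euclNorm (p : Fin 3 → ℝ) : ℝ :=
  Real.sqrt (p 0 ^ 2 + p 1 ^ 2 + p 2 ^ 2)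

/-- The flux of a vector field `W` through the boundary of the cube `[−A,A]³`,
with outward unit normal: the sum of the six face integrals. -/
noncomputable def cubeFlux (W : (Fin 3 → ℝ) → Fin 3 → ℝ) (A : ℝ) : ℝ :=
  (∫ y in (-A)..A, ∫ z in (-A)..A, (W ![A, y, z] 0 - W ![-A, y, z] 0)) +
  (∫ x in (-A)..A, ∫ z in (-A)..A, (W ![x, A, z] 1 - W ![x, -A, z] 1)) +
  (∫ x in (-A)..A, ∫ y in (-A)..A, (W ![x, y, A] 2 - W ![x, y, -A] 2))

namespace intervalIntegral

theorem integral_integral_comp_neg_neg (g : ℝ → ℝ → ℝ) (a b c d : ℝ) :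
    ∫ y in a..b, ∫ z in c..d, g (-y) (-z) = ∫ y in -b..-a, ∫ z in -d..-c, g y z := by
  simp only [integral_comp_neg (f := g _)]
  exact integral_comp_neg (f := fun y => ∫ z in -d..-c, g y z)

theorem integral_integral_sub {f g : ℝ → ℝ → ℝ} (hf : Continuous (Function.uncurry f))
    (hg : Continuous (Function.uncurry g)) (a b c d : ℝ) :
    ∫ y in a..b, ∫ z in c..d, (f y z - g y z) =
      (∫ y in a..b, ∫ z in c..d, f y z) - ∫ y in a..b, ∫ z in c..d, g y z := by
  have hfy (y : ℝ) : Continuous (f y) := hf.comp (Continuous.prodMk_right y)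
  have hgy (y : ℝ) : Continuous (g y) := hg.comp (Continuous.prodMk_right y)
  simp only [integral_sub ((hfy _).intervalIntegrable c d) ((hgy _).intervalIntegrable c d)]
  exact integral_sub
    ((continuous_parametric_intervalIntegral_of_continuous' hf c d).intervalIntegrable a b)
    ((continuous_parametric_intervalIntegral_of_continuous' hg c d).intervalIntegrable a b)

theorem abs_integral_integral_le_of_abs_le {f : ℝ → ℝ → ℝ} {M : ℝ} (hM : ∀ y z, |f y z| ≤ M)
    (a b c d : ℝ) : |∫ y in a..b, ∫ z in c..d, f y z| ≤ M * |d - c| * |b - a| := by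
  simp only [← Real.norm_eq_abs] at hM ⊢
  exact norm_integral_le_of_norm_le_const fun y _ =>
    norm_integral_le_of_norm_le_const fun z _ => hM y z

end intervalIntegral

theorem abs_integral_integral_sub_le_of_odd_part_le {f g : ℝ → ℝ → ℝ}
    (hf : Continuous (Function.uncurry f)) (hg : Continuous (Function.uncurry g)) {A M : ℝ}
    (hA : 0 ≤ A) (hM : ∀ y z, |f y z - g (-y) (-z)| ≤ M) :
    |∫ y in -A..A, ∫ z in -A..A, (f y z - g y z)| ≤ 4 * M * A ^ 2 := by
  have hg_neg : Continuous (Function.uncurry fun y z => g (-y) (-z)) :=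
    hg.comp (continuous_fst.neg.prodMk continuous_snd.neg)
  have hsymm := integral_integral_comp_neg_neg g (-A) A (-A) A
  rw [neg_neg] at hsymm
  rw [integral_integral_sub hf hg, ← hsymm, ← integral_integral_sub hf hg_neg]
  calc _ ≤ M * |A - -A| * |A - -A| := abs_integral_integral_le_of_abs_le hM _ _ _ _
    _ = 4 * M * A ^ 2 := by rw [sub_neg_eq_add, abs_of_nonneg (by linarith)]; ring

theorem abs_le_euclNorm (v : Fin 3 → ℝ) (i : Fin 3) : |v i| ≤ euclNorm v := by
  rw [← Real.sqrt_sq_eq_abs]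
  apply Real.sqrt_le_sqrt
  fin_cases i <;> simp <;> nlinarith [sq_nonneg (v 0), sq_nonneg (v 1), sq_nonneg (v 2)]

theorem abs_cubeFlux_le {W : (Fin 3 → ℝ) → Fin 3 → ℝ} (hW : ∀ j, Continuous fun p => W p j)
    {A M : ℝ} (hA : 0 ≤ A) (hM : ∀ p j, A ≤ euclNorm p → |W p j - W (-p) j| ≤ M) :
    |cubeFlux W A| ≤ 12 * M * A ^ 2 := by
  have hface (v : Fin 3 → ℝ) (i : Fin 3) (hv : v i = A) : A ≤ euclNorm v :=
    hv ▸ (le_abs_self _).trans (abs_le_euclNorm v i)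
  have hx := abs_integral_integral_sub_le_of_odd_part_le
    (f := fun y z => W ![A, y, z] 0) (g := fun y z => W ![-A, y, z] 0)
    (by fun_prop) (by fun_prop) hA fun y z => by
      simpa using hM ![A, y, z] 0 (hface _ 0 rfl)
  have hy := abs_integral_integral_sub_le_of_odd_part_le
    (f := fun x z => W ![x, A, z] 1) (g := fun x z => W ![x, -A, z] 1)
    (by fun_prop) (by fun_prop) hA fun x z => by
      simpa using hM ![x, A, z] 1 (hface _ 1 rfl)
  have hz := abs_integral_integral_sub_le_of_odd_part_le
    (f := fun x y => W ![x, y, A] 2) (g := fun x y => W ![x, y, -A] 2)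
    (by fun_prop) (by fun_prop) hA fun x y => by
      simpa using hM ![x, y, A] 2 (hface _ 2 rfl)
  exact (abs_add_three _ _ _).trans (by linarith)

/-- The field `W^{(l)}` for `Δh_{ij} = δ_{i3} δ_{j3} u`; the index `2 : Fin 3` is the `x₃`-axis. -/
noncomputable def deviationField (u : (Fin 3 → ℝ) → ℝ) (l : Fin 3) (p : Fin 3 → ℝ) (j : Fin 3) :
    ℝ :=
  if j = 2 then 0 else u p * (if l = j then 1 else 0) - p l * fderiv ℝ u p (Pi.single j 1)

section DeviationField

variable {u : (Fin 3 → ℝ) → ℝ}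

theorem eq_deviationField {Δh : Fin 3 → Fin 3 → (Fin 3 → ℝ) → ℝ}
    {W : Fin 3 → (Fin 3 → ℝ) → Fin 3 → ℝ}
    (hΔh : ∀ i j p, Δh i j p =
      (if i = 2 then (1 : ℝ) else 0) * (if j = 2 then (1 : ℝ) else 0) * u p)
    (hW : ∀ l p j, W l p j =
      p l * ((∑ k : Fin 3, fderiv ℝ (Δh k j) p (Pi.single k 1)) -
              fderiv ℝ (fun q => ∑ k : Fin 3, Δh k k q) p (Pi.single j 1)) -
      (Δh l j p - (∑ k : Fin 3, Δh k k p) * (if l = j then (1 : ℝ) else 0))) :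
    W = deviationField u := by
  have hΔh' (k j : Fin 3) : Δh k j = if k = 2 ∧ j = 2 then u else 0 := by
    funext q; rw [hΔh]; split_ifs <;> simp_all
  have htrace : (fun q => ∑ k, Δh k k q) = u := by
    funext q; simp [hΔh]
  funext l p j
  rw [hW, htrace, deviationField]
  fin_cases j <;> fin_cases l <;> simp [hΔh', hΔh, Fin.sum_univ_three, neg_add_eq_sub]

theorem continuous_deviationField (hu : ContDiff ℝ 1 u) (l j : Fin 3) :
    Continuous fun p => deviationField u l p j := by
  have hDu : Continuous fun p => fderiv ℝ u p (Pi.single j 1) :=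
    (hu.continuous_fderiv one_ne_zero).clm_apply continuous_const
  have hu_cont := hu.continuous
  unfold deviationField
  split_ifs <;> fun_prop

theorem abs_deviationField_sub_neg_le {C : ℝ} (hC : 0 ≤ C) {p : Fin 3 → ℝ} (hp : 0 < euclNorm p)
    (hu : |u p - u (-p)| ≤ C / euclNorm p ^ 3)
    (hDu : euclNorm (fun i => fderiv ℝ u p (Pi.single i 1) + fderiv ℝ u (-p) (Pi.single i 1))
        ≤ C / euclNorm p ^ 4)
    (l j : Fin 3) :
    |deviationField u l p j - deviationField u l (-p) j| ≤ 2 * C / euclNorm p ^ 3 := by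
  by_cases hj : j = 2
  · simp only [deviationField, if_pos hj, sub_zero, abs_zero]; positivity
  rw [deviationField, deviationField, if_neg hj, if_neg hj]
  set δ : ℝ := if l = j then 1 else 0
  set r := euclNorm p
  have hδ : |δ| ≤ 1 := by unfold δ; split_ifs <;> simp
  have hDuj := (abs_le_euclNorm _ j).trans hDu
  calc _ = |(u p - u (-p)) * δ - p l * (fderiv ℝ u p (Pi.single j 1) +
        fderiv ℝ u (-p) (Pi.single j 1))| := by rw [Pi.neg_apply]; congr 1; ring
    _ ≤ |u p - u (-p)| * |δ| + |p l| * |fderiv ℝ u p (Pi.single j 1) +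
        fderiv ℝ u (-p) (Pi.single j 1)| := by rw [← abs_mul, ← abs_mul]; exact abs_sub _ _
    _ ≤ C / r ^ 3 * 1 + r * (C / r ^ 4) := by
        gcongr
        · exact abs_le_euclNorm p l
    _ = 2 * C / r ^ 3 := by field_simp; ring

end DeviationField

theorem adm_center_of_mass_deviation_flux_vanishes_general (C R₀ : ℝ) (hC : 0 < C)
    (u : (Fin 3 → ℝ) → ℝ) (hu : ContDiff ℝ 1 u)
    (huparity : ∀ p, R₀ ≤ euclNorm p → |u p - u (-p)| ≤ C / euclNorm p ^ 3)
    (hgradparity : ∀ p, R₀ ≤ euclNorm p →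
      euclNorm (fun i => fderiv ℝ u p (Pi.single i 1) + fderiv ℝ u (-p) (Pi.single i 1))
        ≤ C / euclNorm p ^ 4)
    (Δh : Fin 3 → Fin 3 → (Fin 3 → ℝ) → ℝ)
    (hΔh : ∀ i j p, Δh i j p =
      (if i = 2 then (1 : ℝ) else 0) * (if j = 2 then (1 : ℝ) else 0) * u p)
    (W : Fin 3 → (Fin 3 → ℝ) → Fin 3 → ℝ)
    (hW : ∀ l p j, W l p j =
      p l * ((∑ k : Fin 3, fderiv ℝ (Δh k j) p (Pi.single k 1)) -
              fderiv ℝ (fun q => ∑ k : Fin 3, Δh k k q) p (Pi.single j 1)) -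
      (Δh l j p - (∑ k : Fin 3, Δh k k p) * (if l = j then (1 : ℝ) else 0))) :
    ∀ l : Fin 3,
      Tendsto (fun A => (1 / (16 * Real.pi)) * cubeFlux (W l) A) atTop (nhds 0) := by
  obtain rfl := eq_deviationField hΔh hW
  intro l
  have hflux : ∀ A, max R₀ 1 ≤ A → |cubeFlux (deviationField u l) A| ≤ 24 * C / A := by
    intro A hA
    have hA0 : 0 < A := one_pos.trans_le ((le_max_right _ _).trans hA)
    have hodd (p : Fin 3 → ℝ) (j : Fin 3) (hp : A ≤ euclNorm p) :
        |deviationField u l p j - deviationField u l (-p) j| ≤ 2 * C / A ^ 3 := by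
      have hRp : R₀ ≤ euclNorm p := (le_max_left _ _).trans (hA.trans hp)
      calc _ ≤ 2 * C / euclNorm p ^ 3 := abs_deviationField_sub_neg_le hC.le
              (hA0.trans_le hp) (huparity p hRp) (hgradparity p hRp) l j
        _ ≤ 2 * C / A ^ 3 := by gcongr
    calc _ ≤ 12 * (2 * C / A ^ 3) * A ^ 2 :=
          abs_cubeFlux_le (continuous_deviationField hu l) hA0.le hodd
      _ = 24 * C / A := by field_simp; ring
  have hdecay : Tendsto (fun A : ℝ => 24 * C / A) atTop (nhds 0) :=
    tendsto_const_nhds.div_atTop tendsto_id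
  have hlim : Tendsto (cubeFlux (deviationField u l)) atTop (nhds 0) :=
    squeeze_zero_norm' ((eventually_ge_atTop _).mono hflux) hdecay
  simpa using hlim.const_mul (1 / (16 * Real.pi))

/-- Let `u : ℝ³ → ℝ` be continuously differentiable with
`|u(p)| ≤ C|p|^{−2}`, `|∇u(p)| ≤ C|p|^{−3}`, and the Regge–Teitelboim parity decays
`|u(p) − u(−p)| ≤ C|p|^{−3}`, `|∇u(p) + ∇u(−p)| ≤ C|p|^{−4}` for `|p| ≥ R₀`.
With `Δh_{ij} = δ_{i3}δ_{j3} u` and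
`W^{(l)}_j = p_l(Σ_k ∂_k Δh_{kj} − ∂_j Σ_k Δh_{kk}) − (Δh_{lj} − (Σ_k Δh_{kk})δ_{lj})`,
the center-of-mass deviation flux `(1/16π) Φ_□(W^{(l)}, A)` tends to `0` as `A → ∞`,
for each `l`. -/
theorem adm_center_of_mass_deviation_flux_vanishes (C R₀ : ℝ) (hC : 0 < C) (hR₀ : 0 < R₀)
    (u : (Fin 3 → ℝ) → ℝ) (hu : ContDiff ℝ 1 u)
    (hu0 : ∀ p, R₀ ≤ euclNorm p → |u p| ≤ C / euclNorm p ^ 2)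
    (hgrad : ∀ p, R₀ ≤ euclNorm p →
      euclNorm (fun i => fderiv ℝ u p (Pi.single i 1)) ≤ C / euclNorm p ^ 3)
    (huparity : ∀ p, R₀ ≤ euclNorm p → |u p - u (-p)| ≤ C / euclNorm p ^ 3)
    (hgradparity : ∀ p, R₀ ≤ euclNorm p →
      euclNorm (fun i => fderiv ℝ u p (Pi.single i 1) + fderiv ℝ u (-p) (Pi.single i 1))
        ≤ C / euclNorm p ^ 4)
    (Δh : Fin 3 → Fin 3 → (Fin 3 → ℝ) → ℝ)
    (hΔh : ∀ i j p, Δh i j p =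
      (if i = 2 then (1 : ℝ) else 0) * (if j = 2 then (1 : ℝ) else 0) * u p)
    (W : Fin 3 → (Fin 3 → ℝ) → Fin 3 → ℝ)
    (hW : ∀ l p j, W l p j =
      p l * ((∑ k : Fin 3, fderiv ℝ (Δh k j) p (Pi.single k 1)) -
              fderiv ℝ (fun q => ∑ k : Fin 3, Δh k k q) p (Pi.single j 1)) -
      (Δh l j p - (∑ k : Fin 3, Δh k k p) * (if l = j then (1 : ℝ) else 0))) :
    ∀ l : Fin 3,
      Tendsto (fun A => (1 / (16 * Real.pi)) * cubeFlux (W l) A) atTop (nhds 0) :=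
  adm_center_of_mass_deviation_flux_vanishes_general C R₀ hC u hu huparity hgradparity Δh hΔh W hW
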